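/- (Well-definedness of the vector representation.) The eight matrices ρ(K₁) = u·diag(q²,1)⊗D, ρ(L₁) = u·diag(1,q²)⊗D, ρ(E₁) = −u(q²−1)·e₁₂⊗D, ρ(F₁) = e₂₁⊗I_N, ρ(K₀) = v·diag(ω,q²)⊗D⁻¹, ρ(L₀) = v·diag(ωq²,1)⊗D⁻¹, ρ(E₀) = −v(q²−1)·e₂₁⊗D⁻¹C, ρ(F₀) = e₁₂⊗C⁻¹ (with ρ(K_i⁻¹), ρ(L_i⁻¹) the inverse matrices) satisfy all defining relations of U with a = q⁻²ω; hence there is a unique ℂ-algebra homomorphism ρ : U → M_{2N}(ℂ) taking these values on the generators. -/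

import Mathlib

noncomputable section
open scoped TensorProduct
namespace TwoParamQA

/-- The entries of the parameter matrix `Q`. -/
def qm (q a : ℂ) (i j : Fin 2) : ℂ :=
  if i = j then q ^ 2 else if i = 0 then a else q ^ (-4 : ℤ) * a⁻¹

/-- The bicharacter `χ` on `ℤΠ = ℤα₀ ⊕ ℤα₁` with `χ(αᵢ,αⱼ) = q_{ij}`. -/
def chi (q a : ℂ) (l m : ℤ × ℤ) : ℂ :=
  q ^ (2 * l.1 * m.1) * a ^ (l.1 * m.2) * (q ^ (-4 : ℤ) * a⁻¹) ^ (l.2 * m.1) *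
    q ^ (2 * l.2 * m.2)

/-- The `q`-Serre element `X_i³X_j − c_{ij}(3)_{q²} X_i²X_jX_i + q²c_{ij}²(3)_{q²} X_iX_jX_i²
    − q⁶c_{ij}³ X_jX_i³` (with `q_{ii} = q²`). -/
def serreElt (q : ℂ) {A : Type} [Ring A] [Algebra ℂ A] (X : Fin 2 → A)
    (c : Fin 2 → Fin 2 → ℂ) (i j : Fin 2) : A :=
  X i ^ 3 * X j - (c i j * (1 + q ^ 2 + q ^ 4)) • (X i ^ 2 * X j * X i)
    + (q ^ 2 * c i j ^ 2 * (1 + q ^ 2 + q ^ 4)) • (X i * X j * X i ^ 2)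
    - (q ^ 6 * c i j ^ 3) • (X j * X i ^ 3)

/-- Defining relations of the positive part `U⁺`: the two `q`-Serre relations. -/
inductive PRel (q a : ℂ) : FreeAlgebra ℂ (Fin 2) → FreeAlgebra ℂ (Fin 2) → Prop
  | serre (i j : Fin 2) (h : i ≠ j) :
      PRel q a (serreElt q (FreeAlgebra.ι ℂ) (qm q a) i j) 0

/-- The positive part `U⁺` of `U_{q,Q}(\hat{sl₂})`, presented by `E₀, E₁` and the Serre
relations. -/
abbrev Up (q a : ℂ) := RingQuot (PRel q a)

/-- The generators `E₀, E₁` of `U⁺`. -/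
def Ee (q a : ℂ) (i : Fin 2) : Up q a :=
  RingQuot.mkAlgHom ℂ (PRel q a) (FreeAlgebra.ι ℂ i)

variable {A : Type} [Ring A] [Algebra ℂ A]

/-- Graded bracket `⟦X,Y⟧ = XY − χ(λ,μ)YX` for `X` of degree `l` and `Y` of degree `m`. -/
def gbr (χ : ℤ × ℤ → ℤ × ℤ → ℂ) (l m : ℤ × ℤ) (X Y : A) : A :=
  X * Y - χ l m • (Y * X)

/-- `(n)_x = 1 + x + ⋯ + x^{n-1}`. -/
def qnum (x : ℂ) (n : ℕ) : ℂ := ∑ m ∈ Finset.range n, x ^ m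

/-- `[n]_q = q^{-(n-1)}(n)_{q²}`. -/
def qint (q : ℂ) (n : ℕ) : ℂ := q ^ (1 - (n : ℤ)) * qnum (q ^ 2) n

/-- `(n)_x! = (1)_x (2)_x ⋯ (n)_x`. -/
def qfact (x : ℂ) (n : ℕ) : ℂ := ∏ k ∈ Finset.range n, qnum x (k + 1)

/-- Real root vectors `E_{nδ+α₁}` (generic version, for generators `e₀, e₁` and
bicharacter `χ`); `E_{nδ+α₁}` has degree `nδ+α₁ = (n, n+1)`. -/
def ged1 (q : ℂ) (χ : ℤ × ℤ → ℤ × ℤ → ℂ) (e0 e1 : A) : ℕ → A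
  | 0 => e1
  | n + 1 => (qint q 2)⁻¹ •
      gbr χ (1, 1) ((n : ℤ), (n : ℤ) + 1) (gbr χ (1, 0) (0, 1) e0 e1)
        (ged1 q χ e0 e1 n)

/-- Imaginary root vectors `E_{nδ}` (with the convention `E_{0δ} = 1`, unused). -/
def gedl (q : ℂ) (χ : ℤ × ℤ → ℤ × ℤ → ℂ) (e0 e1 : A) : ℕ → A
  | 0 => 1
  | n + 1 => gbr χ (1, 0) ((n : ℤ), (n : ℤ) + 1) e0 (ged1 q χ e0 e1 n)

/-- Real root vectors `E_{nδ+α₀}`, of degree `(n+1, n)`. -/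
def ged0 (q : ℂ) (χ : ℤ × ℤ → ℤ × ℤ → ℂ) (e0 e1 : A) : ℕ → A
  | 0 => e0
  | n + 1 => (qint q 2)⁻¹ •
      gbr χ ((n : ℤ) + 1, (n : ℤ)) (1, 1) (ged0 q χ e0 e1 n)
        (gbr χ (1, 0) (0, 1) e0 e1)

/-- `et` is the family of modified imaginary root vectors `Ẽ_{kδ}` for the imaginary root
vectors `edl`, i.e. it satisfies the defining recursion
`c^{−(k−1)}·k·E_{kδ} = k·Ẽ_{kδ} + (q−q⁻¹)·Σ_{r=1}^{k−1} r·c^{−(k−r−1)}·Ẽ_{rδ}E_{(k−r)δ}`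
(with `c = q²a`), which is equivalent to
`1 + (q−q⁻¹)Σ_{k≥1} c^{−(k−1)}E_{kδ}z^k = exp((q−q⁻¹)Σ_{k≥1}Ẽ_{kδ}z^k)`. -/
def IsTilde (q c : ℂ) (edl et : ℕ → A) : Prop :=
  ∀ k : ℕ, c ^ (-(k : ℤ)) • (((k : ℂ) + 1) • edl (k + 1)) =
    ((k : ℂ) + 1) • et (k + 1) +
      (q - q⁻¹) • ∑ r ∈ Finset.range k,
        (((r : ℂ) + 1) * c ^ (-((k : ℤ) - 1 - (r : ℤ)))) • (et (r + 1) * edl (k - r))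

/-- `E_{nδ+α₁}` in `U⁺`. -/
def E1v (q a : ℂ) : ℕ → Up q a := ged1 q (chi q a) (Ee q a 0) (Ee q a 1)

/-- `E_{nδ}` in `U⁺`. -/
def Edlv (q a : ℂ) : ℕ → Up q a := gedl q (chi q a) (Ee q a 0) (Ee q a 1)

/-- `E_{nδ+α₀}` in `U⁺`. -/
def E0v (q a : ℂ) : ℕ → Up q a := ged0 q (chi q a) (Ee q a 0) (Ee q a 1)


/-- Generators of `U = U_{q,Q}(\hat{sl₂})`: `T b c i` are the torus generators
(`T false false i = Kᵢ`, `T false true i = Kᵢ⁻¹`, `T true false i = Lᵢ`,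
`T true true i = Lᵢ⁻¹`), together with `Eᵢ` and `Fᵢ`. -/
inductive Gen where
  | T : Bool → Bool → Fin 2 → Gen
  | E : Fin 2 → Gen
  | F : Fin 2 → Gen

/-- Defining relations of `U_{q,Q}(\hat{sl₂})`. -/
inductive URel (q a : ℂ) : FreeAlgebra ℂ Gen → FreeAlgebra ℂ Gen → Prop
  | torusComm (b c b' c' : Bool) (i i' : Fin 2) :
      URel q a (FreeAlgebra.ι ℂ (Gen.T b c i) * FreeAlgebra.ι ℂ (Gen.T b' c' i'))
        (FreeAlgebra.ι ℂ (Gen.T b' c' i') * FreeAlgebra.ι ℂ (Gen.T b c i))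
  | torusInv (b : Bool) (i : Fin 2) :
      URel q a (FreeAlgebra.ι ℂ (Gen.T b false i) * FreeAlgebra.ι ℂ (Gen.T b true i)) 1
  | torusInv' (b : Bool) (i : Fin 2) :
      URel q a (FreeAlgebra.ι ℂ (Gen.T b true i) * FreeAlgebra.ι ℂ (Gen.T b false i)) 1
  | KE (i j : Fin 2) :
      URel q a (FreeAlgebra.ι ℂ (Gen.T false false i) * FreeAlgebra.ι ℂ (Gen.E j))
        (qm q a i j • (FreeAlgebra.ι ℂ (Gen.E j) * FreeAlgebra.ι ℂ (Gen.T false false i)))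
  | KF (i j : Fin 2) :
      URel q a (FreeAlgebra.ι ℂ (Gen.T false false i) * FreeAlgebra.ι ℂ (Gen.F j))
        ((qm q a i j)⁻¹ •
          (FreeAlgebra.ι ℂ (Gen.F j) * FreeAlgebra.ι ℂ (Gen.T false false i)))
  | LE (i j : Fin 2) :
      URel q a (FreeAlgebra.ι ℂ (Gen.T true false i) * FreeAlgebra.ι ℂ (Gen.E j))
        ((qm q a j i)⁻¹ •
          (FreeAlgebra.ι ℂ (Gen.E j) * FreeAlgebra.ι ℂ (Gen.T true false i)))
  | LF (i j : Fin 2) :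
      URel q a (FreeAlgebra.ι ℂ (Gen.T true false i) * FreeAlgebra.ι ℂ (Gen.F j))
        (qm q a j i • (FreeAlgebra.ι ℂ (Gen.F j) * FreeAlgebra.ι ℂ (Gen.T true false i)))
  | EF (i j : Fin 2) :
      URel q a (FreeAlgebra.ι ℂ (Gen.E i) * FreeAlgebra.ι ℂ (Gen.F j) -
          FreeAlgebra.ι ℂ (Gen.F j) * FreeAlgebra.ι ℂ (Gen.E i))
        (if i = j then
          -FreeAlgebra.ι ℂ (Gen.T false false i) + FreeAlgebra.ι ℂ (Gen.T true false i)
         else 0)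
  | serreE (i j : Fin 2) (h : i ≠ j) :
      URel q a (serreElt q (fun k => FreeAlgebra.ι ℂ (Gen.E k)) (qm q a) i j) 0
  | serreF (i j : Fin 2) (h : i ≠ j) :
      URel q a (serreElt q (fun k => FreeAlgebra.ι ℂ (Gen.F k)) (fun i j => qm q a j i) i j) 0

/-- The double parameter quantum affine algebra `U = U_{q,Q}(\hat{sl₂})`. -/
abbrev UU (q a : ℂ) := RingQuot (URel q a)

/-- Image of a generator in `U`. -/
def gen (q a : ℂ) (g : Gen) : UU q a := RingQuot.mkAlgHom ℂ (URel q a) (FreeAlgebra.ι ℂ g)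

def Kg (q a : ℂ) (i : Fin 2) : UU q a := gen q a (Gen.T false false i)
def Kinv (q a : ℂ) (i : Fin 2) : UU q a := gen q a (Gen.T false true i)
def Lg (q a : ℂ) (i : Fin 2) : UU q a := gen q a (Gen.T true false i)
def Linv (q a : ℂ) (i : Fin 2) : UU q a := gen q a (Gen.T true true i)
def Ef (q a : ℂ) (i : Fin 2) : UU q a := gen q a (Gen.E i)
def Ff (q a : ℂ) (i : Fin 2) : UU q a := gen q a (Gen.F i)

/-- `K_β = K₀^x K₁^y` for `β = xα₀ + yα₁` with `x, y ≥ 0`. -/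
def KB (q a : ℂ) (x y : ℕ) : UU q a := Kg q a 0 ^ x * Kg q a 1 ^ y

/-- `L_β = L₀^x L₁^y` for `β = xα₀ + yα₁` with `x, y ≥ 0`. -/
def LB (q a : ℂ) (x y : ℕ) : UU q a := Lg q a 0 ^ x * Lg q a 1 ^ y

/-- Positive real root vectors `E_{nδ+α₁}` in `U`. -/
def UE1 (q a : ℂ) : ℕ → UU q a := ged1 q (chi q a) (Ef q a 0) (Ef q a 1)

/-- Positive imaginary root vectors `E_{nδ}` in `U`. -/
def UEdl (q a : ℂ) : ℕ → UU q a := gedl q (chi q a) (Ef q a 0) (Ef q a 1)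

/-- Positive real root vectors `E_{nδ+α₀}` in `U`. -/
def UE0 (q a : ℂ) : ℕ → UU q a := ged0 q (chi q a) (Ef q a 0) (Ef q a 1)

/-- Negative real root vectors `F_{nδ+α₁}` in `U` (their brackets `[·,·]⁻` use
`χ(μ,λ)`, i.e. the opposite bicharacter). -/
def UF1 (q a : ℂ) : ℕ → UU q a := ged1 q (fun l m => chi q a m l) (Ff q a 0) (Ff q a 1)

/-- Negative imaginary root vectors `F_{nδ}` in `U`. -/
def UFdl (q a : ℂ) : ℕ → UU q a := gedl q (fun l m => chi q a m l) (Ff q a 0) (Ff q a 1)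

/-- Negative real root vectors `F_{nδ+α₀}` in `U`. -/
def UF0 (q a : ℂ) : ℕ → UU q a := ged0 q (fun l m => chi q a m l) (Ff q a 0) (Ff q a 1)


open Kronecker

/-- The cyclic permutation matrix `C` of size `N`. -/
def Cmat (N : ℕ) [NeZero N] : Matrix (Fin N) (Fin N) ℂ :=
  Matrix.of fun s t => if t = s + 1 then 1 else 0

/-- The inverse cyclic permutation matrix `C⁻¹`. -/
def Cinv (N : ℕ) [NeZero N] : Matrix (Fin N) (Fin N) ℂ :=
  Matrix.of fun s t => if s = t + 1 then 1 else 0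

/-- `D = diag(1, ω, …, ω^{N−1})`. -/
def Dmat (N : ℕ) (ω : ℂ) : Matrix (Fin N) (Fin N) ℂ :=
  Matrix.diagonal fun s => ω ^ (s : ℕ)

/-- `D⁻¹ = diag(1, ω⁻¹, …, ω^{−(N−1)})`. -/
def Dinv (N : ℕ) (ω : ℂ) : Matrix (Fin N) (Fin N) ℂ :=
  Matrix.diagonal fun s => (ω ^ (s : ℕ))⁻¹

/-- The `2×2` matrix units. -/
def e11 : Matrix (Fin 2) (Fin 2) ℂ := Matrix.single 0 0 1
def e12 : Matrix (Fin 2) (Fin 2) ℂ := Matrix.single 0 1 1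
def e21 : Matrix (Fin 2) (Fin 2) ℂ := Matrix.single 1 0 1
def e22 : Matrix (Fin 2) (Fin 2) ℂ := Matrix.single 1 1 1

/-- `diag(x, y)`. -/
def dg2 (x y : ℂ) : Matrix (Fin 2) (Fin 2) ℂ := Matrix.diagonal ![x, y]

/-!
Every generator is sent to a scalar multiple of a Kronecker product `A ⊗ₖ B` with `A` in
`M₂(ℂ)` and `B` in `M_N(ℂ)`, the torus generators to invertible diagonal matrices. A relation
`X Y = c • Y X` between two such products therefore splits into a twisted commutation
`diag(x, y) e = (x / y)^{±1} • e diag(x, y)` of a diagonal matrix with a matrix unit in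
`M₂(ℂ)` and one in `M_N(ℂ)`, where `D C = ω⁻¹ • C D` because `ω ^ N = 1`; the choice
`a = q⁻²ω` is exactly what makes the product of the two scalars equal to `q_{ij}`. The Serre
relations hold because `ρ(Eᵢ)² = ρ(Fᵢ)² = 0`, and `[E₀, F₀]` is computed from
`C⁻¹ D⁻¹ C = ω • D⁻¹`.
-/
open Matrix

section TwistedCommutation

variable {R A : Type*} [CommSemiring R] [Semiring A] [Algebra R A]

def QCommute (c : R) (x y : A) : Prop := x * y = c • (y * x)

theorem _root_.Commute.qCommute {x y : A} (h : Commute x y) : QCommute (1 : R) x y := by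
  rw [QCommute, one_smul]; exact h

namespace QCommute

variable {c c' : R} {x y y' : A}

theorem smul_left (h : QCommute c x y) (r : R) : QCommute c (r • x) y := by
  rw [QCommute, smul_mul_assoc, h, mul_smul_comm, smul_comm]

theorem smul_right (h : QCommute c x y) (r : R) : QCommute c x (r • y) := by
  rw [QCommute, mul_smul_comm, h, smul_mul_assoc, smul_comm]

theorem mul_right (h : QCommute c x y) (h' : QCommute c' x y') :
    QCommute (c * c') x (y * y') := by
  rw [QCommute, ← mul_assoc, h, smul_mul_assoc, mul_assoc, h', mul_smul_comm, smul_smul,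
    mul_assoc]

theorem kronecker {m n : Type*} [Fintype m] [DecidableEq m] [Fintype n] [DecidableEq n]
    {α β : R} {A A' : Matrix m m R} {B B' : Matrix n n R}
    (hA : QCommute α A A') (hB : QCommute β B B') (hc : α * β = c) :
    QCommute c (A ⊗ₖ B) (A' ⊗ₖ B') := by
  rw [QCommute, ← mul_kronecker_mul, hA, hB, smul_kronecker, kronecker_smul, smul_smul, hc,
    mul_kronecker_mul]

end QCommute

theorem qCommute_diagonal {n : Type*} [Fintype n] [DecidableEq n] {c : R} {d : n → R}
    {M : Matrix n n R} (h : ∀ i j, M i j ≠ 0 → d i = c * d j) :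
    QCommute c (diagonal d) M := by
  ext i j
  rw [diagonal_mul, Matrix.smul_apply, mul_diagonal, smul_eq_mul]
  by_cases hM : M i j = 0
  · simp [hM]
  · rw [h i j hM]; ring

end TwistedCommutation

theorem _root_.Matrix.IsDiag.commute {n R : Type*} [Fintype n] [DecidableEq n] [CommSemiring R]
    {A B : Matrix n n R} (hA : A.IsDiag) (hB : B.IsDiag) : Commute A B := by
  rw [← hA.diagonal_diag, ← hB.diagonal_diag]; exact commute_diagonal _ _

theorem _root_.Matrix.IsDiag.inv {n R : Type*} [Fintype n] [DecidableEq n] [CommRing R]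
    {A : Matrix n n R} (hA : A.IsDiag) : A⁻¹.IsDiag := by
  rw [← hA.diagonal_diag, inv_diagonal]; exact isDiag_diagonal _

theorem _root_.Matrix.sub_kronecker {l m n p R : Type*} [Ring R] (A₁ A₂ : Matrix l m R)
    (B : Matrix n p R) : (A₁ - A₂) ⊗ₖ B = A₁ ⊗ₖ B - A₂ ⊗ₖ B := by
  ext; simp [sub_mul]

theorem _root_.Matrix.isUnit_smul_kronecker {m n K : Type*} [Fintype m] [DecidableEq m]
    [Fintype n] [DecidableEq n] [Field K] {s : K} {A : Matrix m m K} {B : Matrix n n K}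
    (hs : s ≠ 0) (hA : IsUnit A) (hB : IsUnit B) : IsUnit (s • (A ⊗ₖ B)) := by
  rw [isUnit_iff_isUnit_det] at *
  rw [det_smul, det_kronecker, isUnit_iff_ne_zero]
  simp [hs, hA.ne_zero, hB.ne_zero]

theorem serreElt_eq_zero {A : Type} [Ring A] [Algebra ℂ A] (q : ℂ) (X : Fin 2 → A)
    (c : Fin 2 → Fin 2 → ℂ) (i j : Fin 2) (h : X i ^ 2 = 0) : serreElt q X c i j = 0 := by
  have h3 : X i ^ 3 = 0 := by rw [pow_succ, h, zero_mul]
  simp [serreElt, h, h3]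

theorem map_serreElt {A B : Type} [Ring A] [Algebra ℂ A] [Ring B] [Algebra ℂ B]
    (f : A →ₐ[ℂ] B) (q : ℂ) (X : Fin 2 → A) (c : Fin 2 → Fin 2 → ℂ) (i j : Fin 2) :
    f (serreElt q X c i j) = serreElt q (fun k => f (X k)) c i j := by
  simp [serreElt]

section TwoByTwo

theorem e12_mul_e12 : e12 * e12 = 0 := by rw [e12, single_mul_single_of_ne]; decide
theorem e21_mul_e21 : e21 * e21 = 0 := by rw [e21, single_mul_single_of_ne]; decide
theorem e12_mul_e21 : e12 * e21 = e11 := by rw [e12, e21, single_mul_single_same, mul_one]; rfl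
theorem e21_mul_e12 : e21 * e12 = e22 := by rw [e21, e12, single_mul_single_same, mul_one]; rfl

variable {x y : ℂ}

theorem isUnit_dg2 (hx : x ≠ 0) (hy : y ≠ 0) : IsUnit (dg2 x y) := by
  simp [dg2, isUnit_diagonal, Pi.isUnit_iff, Fin.forall_fin_two, hx, hy]

theorem dg2_qCommute_e12 (hy : y ≠ 0) : QCommute (x / y) (dg2 x y) e12 :=
  qCommute_diagonal fun i j h => by
    fin_cases i <;> fin_cases j <;> simp_all [e12]

theorem dg2_qCommute_e21 (hx : x ≠ 0) : QCommute (y / x) (dg2 x y) e21 :=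
  qCommute_diagonal fun i j h => by
    fin_cases i <;> fin_cases j <;> simp_all [e21]

end TwoByTwo

section Cyclic

variable {N : ℕ} {ω : ℂ}

theorem isUnit_Dmat (hω0 : ω ≠ 0) : IsUnit (Dmat N ω) := by
  simp [Dmat, isUnit_diagonal, Pi.isUnit_iff, hω0]

theorem isUnit_Dinv (hω0 : ω ≠ 0) : IsUnit (Dinv N ω) := by
  simp [Dinv, isUnit_diagonal, Pi.isUnit_iff, hω0]

theorem Dmat_commute_Dinv : Commute (Dmat N ω) (Dinv N ω) := commute_diagonal _ _

variable [NeZero N]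

theorem pow_val_add_one (hω : ω ^ N = 1) (t : Fin N) :
    ω ^ ((t + 1 : Fin N) : ℕ) = ω ^ (t : ℕ) * ω := by
  rw [Fin.val_add, Fin.val_one', ← pow_eq_pow_mod _ hω, pow_add, ← pow_eq_pow_mod _ hω,
    pow_one]

theorem Cmat_mul_Cinv : Cmat N * Cinv N = 1 := by
  ext s t
  simp [Cmat, Cinv, mul_apply, one_apply, eq_comm]

theorem Cinv_mul_Cmat : Cinv N * Cmat N = 1 := mul_eq_one_comm.mp Cmat_mul_Cinv

theorem Dmat_qCommute_Cmat (hω : ω ^ N = 1) : QCommute ω⁻¹ (Dmat N ω) (Cmat N) :=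
  qCommute_diagonal fun s t h => by
    have hω0 : ω ≠ 0 := (IsUnit.of_pow_eq_one hω (NeZero.ne N)).ne_zero
    obtain rfl : t = s + 1 := by by_contra ht; simp [Cmat, ht] at h
    rw [pow_val_add_one hω]; field_simp

theorem Dinv_qCommute_Cmat (hω : ω ^ N = 1) : QCommute ω (Dinv N ω) (Cmat N) :=
  qCommute_diagonal fun s t h => by
    have hω0 : ω ≠ 0 := (IsUnit.of_pow_eq_one hω (NeZero.ne N)).ne_zero
    obtain rfl : t = s + 1 := by by_contra ht; simp [Cmat, ht] at h
    rw [pow_val_add_one hω]; field_simp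

theorem Dmat_qCommute_Cinv (hω : ω ^ N = 1) : QCommute ω (Dmat N ω) (Cinv N) :=
  qCommute_diagonal fun s t h => by
    obtain rfl : s = t + 1 := by by_contra hs; simp [Cinv, hs] at h
    rw [pow_val_add_one hω]; ring

theorem Dinv_qCommute_Cinv (hω : ω ^ N = 1) : QCommute ω⁻¹ (Dinv N ω) (Cinv N) :=
  qCommute_diagonal fun s t h => by
    obtain rfl : s = t + 1 := by by_contra hs; simp [Cinv, hs] at h
    rw [pow_val_add_one hω, mul_inv]; ring

theorem Dmat_qCommute_Dinv_mul_Cmat (hω : ω ^ N = 1) :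
    QCommute ω⁻¹ (Dmat N ω) (Dinv N ω * Cmat N) := by
  simpa only [one_mul] using
    Dmat_commute_Dinv.qCommute.mul_right (Dmat_qCommute_Cmat hω)

theorem Dinv_qCommute_Dinv_mul_Cmat (hω : ω ^ N = 1) :
    QCommute ω (Dinv N ω) (Dinv N ω * Cmat N) := by
  simpa only [one_mul] using
    (Commute.refl _).qCommute.mul_right (Dinv_qCommute_Cmat hω)

theorem Cinv_mul_Dinv_mul_Cmat (hω : ω ^ N = 1) :
    Cinv N * (Dinv N ω * Cmat N) = ω • Dinv N ω := by
  rw [Dinv_qCommute_Cmat hω, mul_smul_comm, ← mul_assoc, Cinv_mul_Cmat, one_mul]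

end Cyclic

section VectorRep

variable (N : ℕ) (ω q u v : ℂ)

abbrev Mat := Matrix (Fin 2 × Fin N) (Fin 2 × Fin N) ℂ

def rhoK : Fin 2 → Mat N :=
  ![v • (dg2 ω (q ^ 2) ⊗ₖ Dinv N ω), u • (dg2 (q ^ 2) 1 ⊗ₖ Dmat N ω)]

def rhoL : Fin 2 → Mat N :=
  ![v • (dg2 (ω * q ^ 2) 1 ⊗ₖ Dinv N ω), u • (dg2 1 (q ^ 2) ⊗ₖ Dmat N ω)]

variable [NeZero N]

def rhoE : Fin 2 → Mat N :=
  ![(-(v * (q ^ 2 - 1))) • (e21 ⊗ₖ (Dinv N ω * Cmat N)),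
    (-(u * (q ^ 2 - 1))) • (e12 ⊗ₖ Dmat N ω)]

def rhoF : Fin 2 → Mat N := ![e12 ⊗ₖ Cinv N, e21 ⊗ₖ 1]

def rhoGen : Gen → Mat N
  | .T false false i => rhoK N ω q u v i
  | .T false true i => (rhoK N ω q u v i)⁻¹
  | .T true false i => rhoL N ω q u v i
  | .T true true i => (rhoL N ω q u v i)⁻¹
  | .E i => rhoE N ω q u v i
  | .F i => rhoF N i

variable {N ω q u v}

theorem isDiag_rhoGen_T (b c : Bool) (i : Fin 2) : (rhoGen N ω q u v (.T b c i)).IsDiag := by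
  have hK : ∀ i, (rhoK N ω q u v i).IsDiag := fun i => by
    fin_cases i <;> exact ((isDiag_diagonal _).kronecker (isDiag_diagonal _)).smul _
  have hL : ∀ i, (rhoL N ω q u v i).IsDiag := fun i => by
    fin_cases i <;> exact ((isDiag_diagonal _).kronecker (isDiag_diagonal _)).smul _
  cases b <;> cases c
  exacts [hK i, (hK i).inv, hL i, (hL i).inv]

theorem rhoGen_T_mul_inv (hω0 : ω ≠ 0) (hq : q ≠ 0) (hu : u ≠ 0) (hv : v ≠ 0) (b : Bool)
    (i : Fin 2) : rhoGen N ω q u v (.T b false i) * rhoGen N ω q u v (.T b true i) = 1 := by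
  have hq2 : q ^ 2 ≠ 0 := pow_ne_zero 2 hq
  have hωq2 : ω * q ^ 2 ≠ 0 := mul_ne_zero hω0 hq2
  suffices h : IsUnit (rhoGen N ω q u v (.T b false i)) by
    cases b <;> exact mul_nonsing_inv _ (isUnit_iff_isUnit_det _ |>.mp h)
  cases b <;> fin_cases i
  · exact isUnit_smul_kronecker hv (isUnit_dg2 hω0 hq2) (isUnit_Dinv hω0)
  · exact isUnit_smul_kronecker hu (isUnit_dg2 hq2 one_ne_zero) (isUnit_Dmat hω0)
  · exact isUnit_smul_kronecker hv (isUnit_dg2 hωq2 one_ne_zero) (isUnit_Dinv hω0)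
  · exact isUnit_smul_kronecker hu (isUnit_dg2 one_ne_zero hq2) (isUnit_Dmat hω0)

theorem rhoE_sq (i : Fin 2) : rhoE N ω q u v i ^ 2 = 0 := by
  fin_cases i <;> simp [rhoE, sq, ← mul_kronecker_mul, e12_mul_e12, e21_mul_e21]

theorem rhoF_sq (i : Fin 2) : rhoF N i ^ 2 = 0 := by
  fin_cases i <;> simp [rhoF, sq, ← mul_kronecker_mul, e12_mul_e12, e21_mul_e21]

theorem rhoE_mul_rhoF_sub_rhoF_mul_rhoE (hω : ω ^ N = 1) (i j : Fin 2) :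
    rhoE N ω q u v i * rhoF N j - rhoF N j * rhoE N ω q u v i =
      if i = j then -rhoK N ω q u v i + rhoL N ω q u v i else 0 := by
  fin_cases i <;> fin_cases j <;>
    simp only [rhoE, rhoF, rhoK, rhoL, Fin.zero_eta, Fin.mk_one, Fin.isValue,
      Matrix.cons_val_zero, Matrix.cons_val_one, smul_mul_assoc, mul_smul_comm,
      ← mul_kronecker_mul, e12_mul_e12, e21_mul_e21, e12_mul_e21, e21_mul_e12, mul_one, one_mul,
      mul_assoc, Cmat_mul_Cinv, Cinv_mul_Dinv_mul_Cmat hω, zero_kronecker, smul_zero, sub_zero,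
      Fin.reduceEq, reduceIte, kronecker_smul, smul_smul, ← smul_kronecker, neg_add_eq_sub,
      ← sub_kronecker]
  -- Both sides are now `X ⊗ₖ D^{±1}`; it remains to compare the `2 × 2` factors.
  all_goals
    refine congrArg (· ⊗ₖ _) ?_
    ext s t
    fin_cases s <;> fin_cases t <;> simp [e11, e22, dg2] <;> ring

end VectorRep

section QCommuteRelations

variable {N : ℕ} [NeZero N] {ω q u v a : ℂ} (hω : ω ^ N = 1) (hq : q ≠ 0)
  (ha : a = q ^ (-2 : ℤ) * ω)
include hω hq ha

theorem rhoK_qCommute_rhoE (i j : Fin 2) :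
    QCommute (qm q a i j) (rhoK N ω q u v i) (rhoE N ω q u v j) := by
  have hω0 : ω ≠ 0 := (IsUnit.of_pow_eq_one hω (NeZero.ne N)).ne_zero
  have hq2 : q ^ 2 ≠ 0 := pow_ne_zero 2 hq
  subst ha
  fin_cases i <;> fin_cases j <;> refine (QCommute.smul_left ?_ _).smul_right _
  · exact (dg2_qCommute_e21 hω0).kronecker (Dinv_qCommute_Dinv_mul_Cmat hω)
      (by simp [qm]; field_simp)
  · exact (dg2_qCommute_e12 hq2).kronecker Dmat_commute_Dinv.symm.qCommute
      (by simp [qm]; field_simp)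
  · exact (dg2_qCommute_e21 hq2).kronecker (Dmat_qCommute_Dinv_mul_Cmat hω)
      (by simp [qm]; field_simp)
  · exact (dg2_qCommute_e12 one_ne_zero).kronecker (Commute.refl _).qCommute (by simp [qm])

theorem rhoK_qCommute_rhoF (i j : Fin 2) :
    QCommute (qm q a i j)⁻¹ (rhoK N ω q u v i) (rhoF N j) := by
  have hω0 : ω ≠ 0 := (IsUnit.of_pow_eq_one hω (NeZero.ne N)).ne_zero
  have hq2 : q ^ 2 ≠ 0 := pow_ne_zero 2 hq
  subst ha
  fin_cases i <;> fin_cases j <;> refine QCommute.smul_left ?_ _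
  · exact (dg2_qCommute_e12 hq2).kronecker (Dinv_qCommute_Cinv hω) (by simp [qm]; field_simp)
  · exact (dg2_qCommute_e21 hω0).kronecker (Commute.one_right _).qCommute
      (by simp [qm]; field_simp)
  · exact (dg2_qCommute_e12 one_ne_zero).kronecker (Dmat_qCommute_Cinv hω)
      (by simp [qm]; field_simp)
  · exact (dg2_qCommute_e21 hq2).kronecker (Commute.one_right _).qCommute
      (by simp [qm])

theorem rhoL_qCommute_rhoE (i j : Fin 2) :
    QCommute (qm q a j i)⁻¹ (rhoL N ω q u v i) (rhoE N ω q u v j) := by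
  have hω0 : ω ≠ 0 := (IsUnit.of_pow_eq_one hω (NeZero.ne N)).ne_zero
  have hq2 : q ^ 2 ≠ 0 := pow_ne_zero 2 hq
  subst ha
  fin_cases i <;> fin_cases j <;> refine (QCommute.smul_left ?_ _).smul_right _
  · exact (dg2_qCommute_e21 (mul_ne_zero hω0 hq2)).kronecker (Dinv_qCommute_Dinv_mul_Cmat hω)
      (by simp [qm]; field_simp)
  · exact (dg2_qCommute_e12 one_ne_zero).kronecker Dmat_commute_Dinv.symm.qCommute
      (by simp [qm]; field_simp)
  · exact (dg2_qCommute_e21 one_ne_zero).kronecker (Dmat_qCommute_Dinv_mul_Cmat hω)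
      (by simp [qm]; field_simp)
  · exact (dg2_qCommute_e12 hq2).kronecker (Commute.refl _).qCommute (by simp [qm])

theorem rhoL_qCommute_rhoF (i j : Fin 2) :
    QCommute (qm q a j i) (rhoL N ω q u v i) (rhoF N j) := by
  have hω0 : ω ≠ 0 := (IsUnit.of_pow_eq_one hω (NeZero.ne N)).ne_zero
  have hq2 : q ^ 2 ≠ 0 := pow_ne_zero 2 hq
  subst ha
  fin_cases i <;> fin_cases j <;> refine QCommute.smul_left ?_ _
  · exact (dg2_qCommute_e12 one_ne_zero).kronecker (Dinv_qCommute_Cinv hω)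
      (by simp [qm]; field_simp)
  · exact (dg2_qCommute_e21 (mul_ne_zero hω0 hq2)).kronecker (Commute.one_right _).qCommute
      (by simp [qm]; field_simp)
  · exact (dg2_qCommute_e12 hq2).kronecker (Dmat_qCommute_Cinv hω) (by simp [qm])
  · exact (dg2_qCommute_e21 one_ne_zero).kronecker (Commute.one_right _).qCommute
      (by simp [qm])

end QCommuteRelations

section Lift

variable {N : ℕ} [NeZero N] {ω q u v a : ℂ}

theorem lift_rhoGen_of_URel (hω : ω ^ N = 1) (hq : q ≠ 0) (hu : u ≠ 0) (hv : v ≠ 0)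
    (ha : a = q ^ (-2 : ℤ) * ω) ⦃x y : FreeAlgebra ℂ Gen⦄ (h : URel q a x y) :
    FreeAlgebra.lift ℂ (rhoGen N ω q u v) x = FreeAlgebra.lift ℂ (rhoGen N ω q u v) y := by
  have hω0 : ω ≠ 0 := (IsUnit.of_pow_eq_one hω (NeZero.ne N)).ne_zero
  have hT := rhoGen_T_mul_inv (N := N) hω0 hq hu hv
  induction h with
  | torusComm b c b' c' i i' =>
    simpa using ((isDiag_rhoGen_T b c i).commute (isDiag_rhoGen_T b' c' i')).eq
  | torusInv b i => simpa using hT b i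
  | torusInv' b i => simpa using mul_eq_one_comm.mp (hT b i)
  | KE i j =>
    simp only [map_mul, map_smul, FreeAlgebra.lift_ι_apply]
    exact rhoK_qCommute_rhoE hω hq ha i j
  | KF i j =>
    simp only [map_mul, map_smul, FreeAlgebra.lift_ι_apply]
    exact rhoK_qCommute_rhoF hω hq ha i j
  | LE i j =>
    simp only [map_mul, map_smul, FreeAlgebra.lift_ι_apply]
    exact rhoL_qCommute_rhoE hω hq ha i j
  | LF i j =>
    simp only [map_mul, map_smul, FreeAlgebra.lift_ι_apply]
    exact rhoL_qCommute_rhoF hω hq ha i j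
  | EF i j =>
    simp only [map_sub, map_mul, apply_ite (FreeAlgebra.lift ℂ (rhoGen N ω q u v)), map_add,
      map_neg, map_zero, FreeAlgebra.lift_ι_apply]
    exact rhoE_mul_rhoF_sub_rhoF_mul_rhoE hω i j
  | serreE i j _ =>
    rw [map_serreElt, map_zero]
    exact serreElt_eq_zero _ _ _ _ _ (by simp only [FreeAlgebra.lift_ι_apply]; exact rhoE_sq i)
  | serreF i j _ =>
    rw [map_serreElt, map_zero]
    exact serreElt_eq_zero _ _ _ _ _ (by simp only [FreeAlgebra.lift_ι_apply]; exact rhoF_sq i)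

def vecRep (hω : ω ^ N = 1) (hq : q ≠ 0) (hu : u ≠ 0) (hv : v ≠ 0)
    (ha : a = q ^ (-2 : ℤ) * ω) : UU q a →ₐ[ℂ] Mat N :=
  RingQuot.liftAlgHom ℂ
    ⟨FreeAlgebra.lift ℂ (rhoGen N ω q u v), lift_rhoGen_of_URel hω hq hu hv ha⟩

theorem vecRep_gen (hω : ω ^ N = 1) (hq : q ≠ 0) (hu : u ≠ 0) (hv : v ≠ 0)
    (ha : a = q ^ (-2 : ℤ) * ω) (g : Gen) :
    vecRep hω hq hu hv ha (gen q a g) = rhoGen N ω q u v g := by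
  rw [vecRep, gen, RingQuot.liftAlgHom_mkAlgHom_apply, FreeAlgebra.lift_ι_apply]

end Lift

theorem gen_T_mul_inv (q a : ℂ) (b : Bool) (i : Fin 2) :
    gen q a (.T b false i) * gen q a (.T b true i) = 1 := by
  simpa only [gen, map_mul, map_one] using
    RingQuot.mkAlgHom_rel ℂ (URel.torusInv (q := q) (a := a) b i)

theorem gen_T_inv_mul (q a : ℂ) (b : Bool) (i : Fin 2) :
    gen q a (.T b true i) * gen q a (.T b false i) = 1 := by
  simpa only [gen, map_mul, map_one] using
    RingQuot.mkAlgHom_rel ℂ (URel.torusInv' (q := q) (a := a) b i)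

theorem UU.algHom_ext {B : Type*} [Ring B] [Algebra ℂ B] {q a : ℂ} {f g : UU q a →ₐ[ℂ] B}
    (hK : ∀ i, f (Kg q a i) = g (Kg q a i)) (hL : ∀ i, f (Lg q a i) = g (Lg q a i))
    (hE : ∀ i, f (Ef q a i) = g (Ef q a i)) (hF : ∀ i, f (Ff q a i) = g (Ff q a i)) :
    f = g := by
  have hT : ∀ b i, f (gen q a (.T b false i)) = g (gen q a (.T b false i)) := by
    intro b i; cases b; exacts [hK i, hL i]
  refine RingQuot.ringQuot_ext' _ _ _ (FreeAlgebra.hom_ext (funext fun x => ?_))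
  change f (gen q a x) = g (gen q a x)
  rcases x with ⟨b, _ | _, i⟩ | i | i
  · exact hT b i
  · refine left_inv_eq_right_inv (a := g (gen q a (.T b false i))) ?_ ?_
    · rw [← hT, ← map_mul, gen_T_inv_mul, map_one]
    · rw [← map_mul, gen_T_mul_inv, map_one]
  · exact hE i
  · exact hF i

theorem stmt_16_general (N : ℕ) [NeZero N] (ω q a u v : ℂ)
    (hω : IsPrimitiveRoot ω N) (hq0 : q ≠ 0)
    (hu : u ≠ 0) (hv : v ≠ 0) (ha : a = q ^ (-2 : ℤ) * ω) :
    ∃! ρ : UU q a →ₐ[ℂ] Matrix (Fin 2 × Fin N) (Fin 2 × Fin N) ℂ,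
      ρ (Kg q a 1) = u • (dg2 (q ^ 2) 1 ⊗ₖ Dmat N ω) ∧
      ρ (Lg q a 1) = u • (dg2 1 (q ^ 2) ⊗ₖ Dmat N ω) ∧
      ρ (Ef q a 1) = (-(u * (q ^ 2 - 1))) • (e12 ⊗ₖ Dmat N ω) ∧
      ρ (Ff q a 1) = e21 ⊗ₖ (1 : Matrix (Fin N) (Fin N) ℂ) ∧
      ρ (Kg q a 0) = v • (dg2 ω (q ^ 2) ⊗ₖ Dinv N ω) ∧
      ρ (Lg q a 0) = v • (dg2 (ω * q ^ 2) 1 ⊗ₖ Dinv N ω) ∧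
      ρ (Ef q a 0) = (-(v * (q ^ 2 - 1))) • (e21 ⊗ₖ (Dinv N ω * Cmat N)) ∧
      ρ (Ff q a 0) = e12 ⊗ₖ Cinv N := by
  have hgen := vecRep_gen hω.pow_eq_one hq0 hu hv ha
  refine ⟨vecRep hω.pow_eq_one hq0 hu hv ha, ⟨hgen (.T false false 1), hgen (.T true false 1),
    hgen (.E 1), hgen (.F 1), hgen (.T false false 0), hgen (.T true false 0), hgen (.E 0),
    hgen (.F 0)⟩, ?_⟩
  rintro ρ ⟨hK1, hL1, hE1, hF1, hK0, hL0, hE0, hF0⟩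
  refine UU.algHom_ext ?_ ?_ ?_ ?_ <;> rw [Fin.forall_fin_two]
  exacts [⟨hK0.trans (hgen (.T false false 0)).symm, hK1.trans (hgen (.T false false 1)).symm⟩,
    ⟨hL0.trans (hgen (.T true false 0)).symm, hL1.trans (hgen (.T true false 1)).symm⟩,
    ⟨hE0.trans (hgen (.E 0)).symm, hE1.trans (hgen (.E 1)).symm⟩,
    ⟨hF0.trans (hgen (.F 0)).symm, hF1.trans (hgen (.F 1)).symm⟩]

/-- Theorem (well-definedness of the vector representation, Section 6): for `a = q⁻²ω`
with `ω` a primitive `N`-th root of unity, the stated eight matrices satisfy all the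
defining relations of `U`, i.e. there is a unique `ℂ`-algebra homomorphism
`ρ : U → M_{2N}(ℂ) = M₂(ℂ)⊗M_N(ℂ)` taking these values on the generators. -/
theorem stmt_16 (N : ℕ) [NeZero N] (ω q a u v : ℂ)
    (hω : IsPrimitiveRoot ω N) (hq0 : q ≠ 0) (hq : ‖q‖ ≠ 1)
    (hu : u ≠ 0) (hv : v ≠ 0) (ha : a = q ^ (-2 : ℤ) * ω) :
    ∃! ρ : UU q a →ₐ[ℂ] Matrix (Fin 2 × Fin N) (Fin 2 × Fin N) ℂ,
      ρ (Kg q a 1) = u • (dg2 (q ^ 2) 1 ⊗ₖ Dmat N ω) ∧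
      ρ (Lg q a 1) = u • (dg2 1 (q ^ 2) ⊗ₖ Dmat N ω) ∧
      ρ (Ef q a 1) = (-(u * (q ^ 2 - 1))) • (e12 ⊗ₖ Dmat N ω) ∧
      ρ (Ff q a 1) = e21 ⊗ₖ (1 : Matrix (Fin N) (Fin N) ℂ) ∧
      ρ (Kg q a 0) = v • (dg2 ω (q ^ 2) ⊗ₖ Dinv N ω) ∧
      ρ (Lg q a 0) = v • (dg2 (ω * q ^ 2) 1 ⊗ₖ Dinv N ω) ∧
      ρ (Ef q a 0) = (-(v * (q ^ 2 - 1))) • (e21 ⊗ₖ (Dinv N ω * Cmat N)) ∧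
      ρ (Ff q a 0) = e12 ⊗ₖ Cinv N :=
  stmt_16_general N ω q a u v hω hq0 hu hv ha

end TwoParamQA
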